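/- arXiv:1805.10801 — 4 statements merged into one kernel-verified Lean document; each statement's English description precedes it below -/
import Mathlib

section
/- Fix ε ∈ (0,1), let c = 2/(1 - ln 2), and define n(m) = ⌈c·m·(ln(2m) - ln ε)⌉ for m ≥ 1. Then for every integer m ≥ 1, ∑_{k=1}^{m} n(k)/(k+1) ≤ n(m) + 1. -/
theorem cost_sum_upper (ε : ℝ) (hε : ε ∈ Set.Ioo (0:ℝ) 1) (c : ℝ)
    (hc : c = 2 / (1 - Real.log 2)) (n : ℕ → ℕ)
    (hn : ∀ m : ℕ, 1 ≤ m → n m = ⌈c * m * (Real.log (2 * m) - Real.log ε)⌉₊)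
    (m : ℕ) (hm : 1 ≤ m) :
    ∑ k ∈ Finset.Icc 1 m, (n k : ℝ) / ((k : ℝ) + 1) ≤ (n m : ℝ) + 1 := by
  have hlog2 : (0.6931471803 : ℝ) < Real.log 2 := Real.log_two_gt_d9
  have hlog2' : Real.log 2 < 0.6931471808 := Real.log_two_lt_d9
  have hden : (0:ℝ) < 1 - Real.log 2 := by linarith
  have hcpos : 0 < c := by rw [hc]; positivity
  have hcL1 : 1 ≤ c * Real.log 2 := by
    rw [hc, div_mul_eq_mul_div, le_div_iff₀ hden]
    linarith
  have hεlog : Real.log ε < 0 := Real.log_neg hε.1 hε.2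
  set L : ℝ := Real.log (2 * m) - Real.log ε with hLdef
  have hmR : (1:ℝ) ≤ (m:ℝ) := by exact_mod_cast hm
  have hlogm : Real.log 2 ≤ Real.log (2 * m) := by
    apply Real.log_le_log (by norm_num)
    nlinarith
  have hL2 : Real.log 2 ≤ L := by simp only [hLdef]; linarith
  have hcL : 1 ≤ c * L := le_trans hcL1 (by nlinarith)
  have hterm : ∀ k ∈ Finset.Icc 1 m, (n k : ℝ) / ((k : ℝ) + 1) ≤ c * L := by
    intro k hk
    simp only [Finset.mem_Icc] at hk
    have hk1 : (1:ℝ) ≤ (k:ℝ) := by exact_mod_cast hk.1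
    have hkm : (k:ℝ) ≤ (m:ℝ) := by exact_mod_cast hk.2
    have hkL : Real.log (2 * k) ≤ Real.log (2 * m) := by
      apply Real.log_le_log (by nlinarith)
      nlinarith
    have hx0 : 0 ≤ c * (k:ℝ) * (Real.log (2 * k) - Real.log ε) := by
      have : Real.log 2 ≤ Real.log (2 * k) := by
        apply Real.log_le_log (by norm_num); nlinarith
      have h1 : 0 < Real.log (2 * k) - Real.log ε := by linarith
      positivity
    have hceil : (n k : ℝ) ≤ c * (k:ℝ) * (Real.log (2 * k) - Real.log ε) + 1 := by
      rw [hn k hk.1]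
      exact le_of_lt (Nat.ceil_lt_add_one hx0)
    have h2 : c * (k:ℝ) * (Real.log (2 * k) - Real.log ε) ≤ c * (k:ℝ) * L := by
      apply mul_le_mul_of_nonneg_left _ (by positivity)
      simp only [hLdef]; linarith
    rw [div_le_iff₀ (by linarith : (0:ℝ) < (k:ℝ) + 1)]
    nlinarith
  calc ∑ k ∈ Finset.Icc 1 m, (n k : ℝ) / ((k : ℝ) + 1)
      ≤ ∑ k ∈ Finset.Icc 1 m, c * L := Finset.sum_le_sum hterm
    _ = (m:ℝ) * (c * L) := by
        rw [Finset.sum_const, Nat.card_Icc]; simp [nsmul_eq_mul]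
    _ ≤ (n m : ℝ) := by
        rw [hn m hm]
        have := Nat.le_ceil (c * (m:ℝ) * (Real.log (2 * m) - Real.log ε))
        simp only [hLdef] at *
        linarith [this]
    _ ≤ (n m : ℝ) + 1 := by linarith
end

section
/- Fix ε ∈ (0,1), let c = 2/(1 - ln 2), and define n(m) = ⌈c·m·(ln(2m) - ln ε)⌉ for m ≥ 1. Then for every integer m ≥ 1, ∑_{k=1}^{m} n(k)/(k+1) ≥ (1/2)·n(m) - 2c. -/
/-!
Bound `n(k) ≥ F(k) := c k (ln(2k) - ln ε)`. The weights `1/(k+1)` telescope: as soon as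
`k F(k+1) ≤ (k+2) F(k)`, the term `F(k+1)/(k+2)` dominates `(F(k+1) - F(k))/2`. That condition is
`(k+1) ln(2(k+1)) ≤ (k+2) ln(2k)` up to the harmless `-ln ε ≥ 0`, which holds for `k ≥ 2`; the first
two terms are computed by hand and lose only `c ln 2 / 6`, and the ceiling in `n(m)` costs `1/2`.
-/

open Finset Real

theorem sub_div_two_le_sum_Ioc_div_succ (g : ℕ → ℝ) {a b : ℕ} (hab : a ≤ b)
    (h : ∀ k, a ≤ k → k < b → (k : ℝ) * g (k + 1) ≤ (k + 2) * g k) :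
    (g b - g a) / 2 ≤ ∑ k ∈ Ioc a b, g k / (k + 1) := by
  induction b, hab using Nat.le_induction with
  | base => simp
  | succ b hab ih =>
    have hstep : (g (b + 1) - g b) / 2 ≤ g (b + 1) / ((b + 1 : ℕ) + 1) := by
      have := h b hab (by omega)
      rw [div_le_div_iff₀ two_pos (by positivity)]
      push_cast
      linarith
    rw [sum_Ioc_succ_top (by omega)]
    linarith [ih fun k hak hkb ↦ h k hak (by omega)]

theorem succ_mul_log_two_mul_succ_le (m : ℕ) (hm : 2 ≤ m) :
    ((m : ℝ) + 1) * log (2 * ((m : ℝ) + 1)) ≤ ((m : ℝ) + 2) * log (2 * m) := by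
  obtain rfl | hm3 := hm.eq_or_lt
  · -- `3 ln 6 ≤ 4 ln 4` is `6³ ≤ 4⁴`
    have h : log ((6 : ℝ) ^ 3) ≤ log ((4 : ℝ) ^ 4) := log_le_log (by norm_num) (by norm_num)
    rw [log_pow, log_pow] at h
    norm_num at h ⊢
    linarith
  have hx : (3 : ℝ) ≤ m := by exact_mod_cast hm3
  have hsplit : log (2 * ((m : ℝ) + 1)) = log (2 * m) + log (((m : ℝ) + 1) / m) := by
    rw [← log_mul (by positivity) (by positivity)]
    field_simp
  have hratio : ((m : ℝ) + 1) * log (((m : ℝ) + 1) / m) ≤ 4 / 3 := by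
    have hlog := log_le_sub_one_of_pos (show (0 : ℝ) < ((m : ℝ) + 1) / m by positivity)
    calc ((m : ℝ) + 1) * log (((m : ℝ) + 1) / m)
        ≤ ((m : ℝ) + 1) * (((m : ℝ) + 1) / m - 1) := by gcongr
      _ = 1 + 1 / m := by field_simp; ring
      _ ≤ 4 / 3 := by rw [add_comm, ← le_sub_iff_add_le, div_le_iff₀ (by positivity)]; linarith
  have hlog4 : 4 / 3 ≤ log (2 * m) := by
    calc (4 / 3 : ℝ) ≤ 2 * log 2 := by linarith [log_two_gt_d9]
      _ = log (2 ^ 2) := by rw [log_pow]; norm_num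
      _ ≤ log (2 * m) := log_le_log (by norm_num) (by linarith)
  rw [hsplit]
  linarith

theorem half_sub_le_sum_Icc_mul_log_div_succ {c e : ℝ} (hc : 0 ≤ c) (he : e ≤ 0) {m : ℕ}
    (hm : 1 ≤ m) :
    c * m * (log (2 * m) - e) / 2 - c * log 2 / 6 ≤
      ∑ k ∈ Icc 1 m, c * k * (log (2 * k) - e) / (k + 1) := by
  set g : ℕ → ℝ := fun k ↦ c * k * (log (2 * k) - e)
  have hloss : 0 ≤ c * log 2 := mul_nonneg hc (log_nonneg one_le_two)
  obtain rfl | hm2 := hm.eq_or_lt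
  · simp only [Icc_self, sum_singleton]
    norm_num
    linarith
  have htele : (g m - g 2) / 2 ≤ ∑ k ∈ Ioc 2 m, g k / (k + 1) := by
    refine sub_div_two_le_sum_Ioc_div_succ g hm2 fun k hk _ ↦ ?_
    have := succ_mul_log_two_mul_succ_le k hk
    simp only [g]
    push_cast
    have hk0 : (0 : ℝ) ≤ c * k := by positivity
    nlinarith [mul_le_mul_of_nonneg_left this hk0]
  have hhead : ∑ k ∈ Ioc 0 2, g k / (k + 1) = g 1 / 2 + g 2 / 3 := by
    rw [sum_Ioc_succ_top (by norm_num), sum_Ioc_succ_top (by norm_num)]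
    norm_num
  have hlog4 : log 4 = 2 * log 2 := by
    rw [show (4 : ℝ) = 2 ^ 2 by norm_num, log_pow]; norm_num
  have hg1 : g 1 = c * (log 2 - e) := by simp [g]
  have hg2 : g 2 = 2 * c * (2 * log 2 - e) := by simp only [g]; norm_num; rw [hlog4]; ring
  rw [show Icc 1 m = Ioc 0 m from Icc_add_one_left_eq_Ioc 0 m,
    ← sum_Ioc_consecutive _ (by norm_num) hm2, hhead]
  change g m / 2 - _ ≤ _
  nlinarith [mul_nonneg hc (neg_nonneg.mpr he)]

theorem cost_sum_lower (ε : ℝ) (hε : ε ∈ Set.Ioo (0:ℝ) 1) (c : ℝ)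
    (hc : c = 2 / (1 - Real.log 2)) (n : ℕ → ℕ)
    (hn : ∀ m : ℕ, 1 ≤ m → n m = ⌈c * m * (Real.log (2 * m) - Real.log ε)⌉₊)
    (m : ℕ) (hm : 1 ≤ m) :
    (1 / 2) * (n m : ℝ) - 2 * c ≤ ∑ k ∈ Finset.Icc 1 m, (n k : ℝ) / ((k : ℝ) + 1) := by
  have hlog2 : 0 < log 2 ∧ log 2 < 1 := ⟨log_pos one_lt_two, by linarith [log_two_lt_d9]⟩
  have hc2 : 2 ≤ c := by
    rw [hc, le_div_iff₀ (by linarith)]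
    linarith
  have he : log ε ≤ 0 := log_nonpos hε.1.le hε.2.le
  have hF_le_n : ∀ k ∈ Icc 1 m, c * k * (log (2 * k) - log ε) / (k + 1) ≤ (n k : ℝ) / (k + 1) :=
    fun k hk ↦ by
      rw [hn k (mem_Icc.1 hk).1]
      gcongr
      exact Nat.le_ceil _
  have hn_le_F : (n m : ℝ) ≤ c * m * (log (2 * m) - log ε) + 1 := by
    have hm' : (1 : ℝ) ≤ 2 * m := by norm_cast; omega
    rw [hn m hm]
    have hc0 : 0 ≤ c * m := by positivity
    exact (Nat.ceil_lt_add_one (mul_nonneg hc0 (by linarith [log_nonneg hm']))).le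
  have hsum := half_sub_le_sum_Icc_mul_log_div_succ (c := c) (by linarith) he hm
  have hloss : c * log 2 ≤ c := mul_le_of_le_one_right (by linarith) hlog2.2.le
  linarith [sum_le_sum hF_le_n]
end

section
/- Fix ε₀ ∈ (0,1), let c = 2/(1 - ln 2), set ε(m) = 6ε₀/(π m)², and define n(m) = ⌈c·m·(ln(2m) + 2·ln m - ln(6ε₀/π²))⌉. Then for every integer m ≥ 1, (1/2)·n(m) - 6c ≤ ∑_{k=1}^{m} n(k)/(k+1) ≤ n(m) + 1. -/
/-!
Write `n k = ⌈k y_k⌉₊` with `y_k = c (a + 3 log k)` and `a = log 2 - log (6 ε₀ / π²) ≥ log 2`, so that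
`c a ≥ 1` and hence `y_k ≥ 1`. Then `n k / (k + 1) ≤ (k y_k + 1) / (k + 1) ≤ y_k ≤ y_m`, and summing gives the
upper bound `∑ ≤ m y_m ≤ n m`. For the lower bound, `k / (k + 1) ≥ 1 / 2` handles the constant part of `y_k`, and
the logarithmic part rests on `∑_{k ≤ m} k log k / (k + 1) ≥ m log m / 2 - 3 / 2`: the increment of `x log x / 2`
from `k - 1` to `k` is at most `(log k + 1) / 2`, which is at most the new summand `k log k / (k + 1)` once
`log k ≥ 3 / 2`, i.e. for `k ≥ 5`, and exceeds it by less than `1 / 2` for `k = 2, 3, 4`.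
-/

open Finset Real

lemma three_halves_le_log_five : (3 : ℝ) / 2 ≤ log 5 := by
  rw [le_log_iff_exp_le (by norm_num)]
  have hsq : exp (3 / 2) ^ 2 = exp 1 ^ 3 := by
    rw [← exp_nat_mul, ← exp_nat_mul]; norm_num
  have hcube : exp 1 ^ 3 < 2.8 ^ 3 := by
    gcongr; linarith [exp_one_lt_d9]
  nlinarith [exp_pos (3 / 2)]

lemma add_one_mul_log_add_one_sub_mul_log_le {x : ℝ} (hx : 0 ≤ x) :
    (x + 1) * log (x + 1) - x * log x ≤ log (x + 1) + 1 := by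
  rcases hx.eq_or_lt with rfl | hx
  · simp
  have h := log_le_sub_one_of_pos (show 0 < (x + 1) / x by positivity)
  rw [log_div (by positivity) hx.ne'] at h
  have hx1 : x * (log (x + 1) - log x) ≤ 1 :=
    calc x * (log (x + 1) - log x) ≤ x * ((x + 1) / x - 1) := by gcongr
      _ = 1 := by field_simp; ring
  linarith

lemma sum_mul_log_div_add_one_ge {m : ℕ} (hm : 1 ≤ m) :
    m * log m / 2 - 3 / 2 ≤ ∑ k ∈ Icc 1 m, k * log k / (k + 1) := by
  suffices h : m * log m / 2 - (min (m : ℝ) 4 - 1) / 2 ≤ ∑ k ∈ Icc 1 m, k * log k / (k + 1) by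
    linarith [min_le_right (m : ℝ) 4]
  induction m, hm using Nat.le_induction with
  | base => simp
  | succ m hm ih =>
    rw [sum_Icc_succ_top (by omega)]
    push_cast
    have hm' : (1 : ℝ) ≤ m := by exact_mod_cast hm
    have hincr := add_one_mul_log_add_one_sub_mul_log_le (x := m) (by positivity)
    have hlog : 0 ≤ log ((m : ℝ) + 1) := log_nonneg (by linarith)
    rw [show (m : ℝ) + 1 + 1 = m + 2 by ring]
    rcases lt_or_ge m 4 with hlt | hge
    · have hlt' : (m : ℝ) + 1 ≤ 4 := by exact_mod_cast hlt
      rw [min_eq_left (by linarith)] at ih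
      rw [min_eq_left hlt']
      have hstep : log ((m : ℝ) + 1) / 2 ≤ (m + 1) * log (m + 1) / (m + 2) := by
        rw [le_div_iff₀ (by positivity)]; nlinarith
      linarith
    · have hge' : (4 : ℝ) ≤ m := by exact_mod_cast hge
      rw [min_eq_right hge'] at ih
      rw [min_eq_right (by linarith)]
      have h5 : 3 / 2 ≤ log ((m : ℝ) + 1) :=
        three_halves_le_log_five.trans (log_le_log (by norm_num) (by linarith))
      have hstep : (log ((m : ℝ) + 1) + 1) / 2 ≤ (m + 1) * log (m + 1) / (m + 2) := by
        rw [le_div_iff₀ (by positivity)]; nlinarith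
      linarith

lemma natCeil_mul_div_add_one_le {y : ℝ} (hy : 1 ≤ y) (k : ℕ) : (⌈k * y⌉₊ : ℝ) / (k + 1) ≤ y := by
  rw [div_le_iff₀ (by positivity)]
  linarith [Nat.ceil_lt_add_one (show 0 ≤ k * y by positivity)]

lemma sum_natCeil_mul_div_add_one_le {y : ℕ → ℝ} {m : ℕ} (hy : ∀ k ∈ Icc 1 m, 1 ≤ y k ∧ y k ≤ y m) :
    ∑ k ∈ Icc 1 m, (⌈k * y k⌉₊ : ℝ) / (k + 1) ≤ m * y m :=
  calc ∑ k ∈ Icc 1 m, (⌈k * y k⌉₊ : ℝ) / (k + 1) ≤ ∑ _k ∈ Icc 1 m, y m :=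
        sum_le_sum fun k hk => (natCeil_mul_div_add_one_le (hy k hk).1 k).trans (hy k hk).2
    _ = m * y m := by simp

lemma le_sum_natCeil_mul_log_div_add_one {a c : ℝ} (ha : 0 ≤ a) (hc : 0 ≤ c) {m : ℕ} (hm : 1 ≤ m) :
    c * (a * m / 2 + 3 * (m * log m / 2 - 3 / 2)) ≤
      ∑ k ∈ Icc 1 m, (⌈k * (c * (a + 3 * log k))⌉₊ : ℝ) / (k + 1) := by
  calc c * (a * m / 2 + 3 * (m * log m / 2 - 3 / 2))
      ≤ c * (a * m / 2 + 3 * ∑ k ∈ Icc 1 m, k * log k / (k + 1)) := by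
        gcongr; exact sum_mul_log_div_add_one_ge hm
    _ = ∑ k ∈ Icc 1 m, c * (a * (1 / 2) + 3 * (k * log k / (k + 1))) := by
        rw [← mul_sum, sum_add_distrib, sum_const, Nat.card_Icc, ← mul_sum, nsmul_eq_mul,
          Nat.add_sub_cancel]
        ring
    _ ≤ ∑ k ∈ Icc 1 m, c * (a * (k / (k + 1)) + 3 * (k * log k / (k + 1))) := by
        refine sum_le_sum fun k hk => ?_
        have hk : (1 : ℝ) ≤ k := by exact_mod_cast (mem_Icc.1 hk).1
        have hhalf : (1 : ℝ) / 2 ≤ k / (k + 1) := by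
          rw [div_le_div_iff₀ (by norm_num) (by positivity)]
          linarith
        gcongr c * (a * ?_ + _)
    _ ≤ ∑ k ∈ Icc 1 m, (⌈k * (c * (a + 3 * log k))⌉₊ : ℝ) / (k + 1) :=
        sum_le_sum fun k _ => by
          rw [show c * (a * (k / (k + 1)) + 3 * (k * log k / (k + 1))) = k * (c * (a + 3 * log k)) / (k + 1)
            by ring]
          gcongr
          exact Nat.le_ceil _

lemma two_le_two_div_one_sub_log_two : 2 ≤ 2 / (1 - log 2) := by
  rw [le_div_iff₀ (by linarith [log_two_lt_d9])]
  linarith [log_two_gt_d9]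

theorem cost_sum_uniform (ε₀ : ℝ) (hε₀ : ε₀ ∈ Set.Ioo (0:ℝ) 1) (c : ℝ)
    (hc : c = 2 / (1 - Real.log 2)) (n : ℕ → ℕ)
    (hn : ∀ m : ℕ, 1 ≤ m →
      n m = ⌈c * m * (Real.log (2 * m) + 2 * Real.log m - Real.log (6 * ε₀ / Real.pi ^ 2))⌉₊)
    (m : ℕ) (hm : 1 ≤ m) :
    (1 / 2) * (n m : ℝ) - 6 * c ≤ ∑ k ∈ Finset.Icc 1 m, (n k : ℝ) / ((k : ℝ) + 1) ∧
      ∑ k ∈ Finset.Icc 1 m, (n k : ℝ) / ((k : ℝ) + 1) ≤ (n m : ℝ) + 1 := by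
  have hL : log (6 * ε₀ / π ^ 2) ≤ 0 := log_nonpos (by have := hε₀.1; positivity)
    ((div_le_one (by positivity)).2 (by nlinarith [hε₀.2, pi_gt_three]))
  set a := log 2 - log (6 * ε₀ / π ^ 2) with ha_def
  have ha : log 2 ≤ a := by linarith
  have ha0 : 0 ≤ a := (log_nonneg one_le_two).trans ha
  have hc2 : 2 ≤ c := hc ▸ two_le_two_div_one_sub_log_two
  have hca : 1 ≤ c * a := by nlinarith [log_two_gt_d9]
  have hn' : ∀ k ∈ Icc 1 m, (n k : ℝ) = ⌈k * (c * (a + 3 * log k))⌉₊ := fun k hk => by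
    have hk0 : (k : ℝ) ≠ 0 := Nat.cast_ne_zero.2 (Nat.one_le_iff_ne_zero.1 (mem_Icc.1 hk).1)
    rw [hn k (mem_Icc.1 hk).1, log_mul two_ne_zero hk0]
    congr 2; ring
  rw [sum_congr rfl fun k hk => by rw [hn' k hk], hn' m (mem_Icc.2 ⟨hm, le_rfl⟩)]
  have hym : 0 ≤ m * (c * (a + 3 * log m)) := by
    have := log_natCast_nonneg m
    positivity
  constructor
  · have hlow := le_sum_natCeil_mul_log_div_add_one (a := a) (c := c) ha0 (by linarith) hm
    linarith [Nat.ceil_lt_add_one hym]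
  · calc _ ≤ m * (c * (a + 3 * log m)) := sum_natCeil_mul_div_add_one_le fun k hk => by
          have hk := mem_Icc.1 hk
          have hlogk : 0 ≤ c * log k := mul_nonneg (by linarith) (log_natCast_nonneg k)
          refine ⟨by linarith, ?_⟩
          gcongr
          · exact_mod_cast hk.1
          · exact hk.2
      _ ≤ ⌈m * (c * (a + 3 * log m))⌉₊ + 1 := by linarith [Nat.le_ceil (m * (c * (a + 3 * log m)))]
end

section
/- Let u ∈ L²(D,ρ), let V be a finite-dimensional subspace, P the L²(D,ρ)-orthogonal projection onto V, and let ‖·‖_n be a seminorm arising from an inner product on functions such that ‖v‖_n² ≥ (1/2)‖v‖² for all v ∈ V. Let ũ ∈ V be the minimizer of ‖u - v‖_n over v ∈ V. Then ‖u - ũ‖² ≤ ‖u - Pu‖² + 2·‖u - Pu‖_n². -/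
/-!
Galerkin orthogonality: since `ut` minimizes the quadratic form `v ↦ B (u - v) (u - v)` over `K`,
the residual `u - ut` is `B`-orthogonal to `K`. With `e = ut - Pu ∈ K`, this gives
`B (u - Pu) = B (u - ut) + B e ≥ B e ≥ ‖e‖² / 2`, and Pythagoras in `E` gives
`‖u - ut‖² = ‖u - Pu‖² + ‖e‖²`.
-/

open scoped RealInnerProductSpace

section BilinearForm

variable {M : Type*} [AddCommGroup M] [Module ℝ M] (B : M →ₗ[ℝ] M →ₗ[ℝ] ℝ)

theorem apply_add_apply_add_of_apply_eq_zero (hsymm : ∀ a b : M, B a b = B b a) {x y : M}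
    (hxy : B x y = 0) : B (x + y) (x + y) = B x x + B y y := by
  simp only [map_add, LinearMap.add_apply, hxy, hsymm y x]
  ring

theorem apply_eq_zero_of_forall_apply_le_apply_add_smul (hsymm : ∀ a b : M, B a b = B b a)
    {x w : M} (hmin : ∀ t : ℝ, B x x ≤ B (x + t • w) (x + t • w)) : B x w = 0 := by
  have hquad : ∀ t : ℝ, 0 ≤ B w w * (t * t) + 2 * B x w * t + 0 := fun t => by
    have h := hmin t
    simp only [map_add, map_smul, LinearMap.add_apply, LinearMap.smul_apply, smul_eq_mul,
      hsymm w x] at h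
    linarith
  have hdiscr := discrim_le_zero hquad
  rw [discrim] at hdiscr
  nlinarith [sq_nonneg (B x w)]

theorem apply_eq_zero_of_forall_mem_le (hsymm : ∀ a b : M, B a b = B b a) {K : Submodule ℝ M}
    {u ut : M} (hutK : ut ∈ K) (hmin : ∀ v ∈ K, B (u - ut) (u - ut) ≤ B (u - v) (u - v))
    {w : M} (hw : w ∈ K) : B (u - ut) w = 0 := by
  refine apply_eq_zero_of_forall_apply_le_apply_add_smul B hsymm fun t => ?_
  have h := hmin (ut - t • w) (K.sub_mem hutK (K.smul_mem t hw))
  rwa [sub_sub_eq_add_sub, add_sub_right_comm] at h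

end BilinearForm

theorem instance_optimality {E : Type*} [NormedAddCommGroup E]
    [InnerProductSpace ℝ E] (K : Submodule ℝ E) [K.HasOrthogonalProjection]
    (B : E →ₗ[ℝ] E →ₗ[ℝ] ℝ)
    (hsymm : ∀ a b : E, B a b = B b a)
    (hpos : ∀ a : E, 0 ≤ B a a)
    (hstab : ∀ v ∈ K, (1 / 2) * ‖v‖ ^ 2 ≤ B v v)
    (u : E) (ut : E) (hutK : ut ∈ K)
    (hmin : ∀ v ∈ K, B (u - ut) (u - ut) ≤ B (u - v) (u - v)) :
    ‖u - ut‖ ^ 2 ≤ ‖u - (K.orthogonalProjectionOnto u : E)‖ ^ 2 +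
      2 * B (u - (K.orthogonalProjectionOnto u : E)) (u - (K.orthogonalProjectionOnto u : E)) := by
  set P : E := (K.orthogonalProjectionOnto u : E)
  have heK : ut - P ∈ K := K.sub_mem hutK (K.orthogonalProjectionOnto u).2
  have hsplitB : B (u - P) (u - P) = B (u - ut) (u - ut) + B (ut - P) (ut - P) := by
    rw [← apply_add_apply_add_of_apply_eq_zero B hsymm
      (apply_eq_zero_of_forall_mem_le B hsymm hutK hmin heK), sub_add_sub_cancel]
  have hpyth : ‖u - ut‖ ^ 2 = ‖u - P‖ ^ 2 + ‖ut - P‖ ^ 2 := by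
    have h := norm_sub_sq_eq_norm_sq_add_norm_sq_real (K.starProjection_inner_eq_zero u _ heK)
    rw [Submodule.starProjection_apply, sub_sub_sub_cancel_right] at h
    simpa only [sq] using h
  have hstabe := hstab _ heK
  have hres := hpos (u - ut)
  linarith
end
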